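/- Fundamental Theorem of Affine Normal Play: an affine game G satisfies G ≥ 0 if and only if Left wins G playing second, i.e., if and only if the outcome of G is in L ∪ P. -/

import Mathlib

inductive AGame : Type
  | inf : AGame
  | binf : AGame
  | node : List AGame → List AGame → AGame

namespace AGame

/-- The affine games: option sets are nonempty (hereditarily). -/
inductive Valid : AGame → Prop
  | inf : Valid .inf
  | binf : Valid .binf
  | node : ∀ {L R : List AGame}, L ≠ [] → R ≠ [] →
      (∀ g ∈ L, Valid g) → (∀ g ∈ R, Valid g) → Valid (.node L R)

/-- Total version of the disjunctive sum (value on the undefined cases `∞ + ∞̄` is junk). -/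
def add' : AGame → AGame → AGame
  | .inf, _ => .inf
  | _, .inf => .inf
  | .binf, _ => .binf
  | _, .binf => .binf
  | .node L R, .node L' R' =>
      .node ((L.attach.map fun x => add' x.1 (.node L' R')) ++
             (L'.attach.map fun y => add' (.node L R) y.1))
            ((R.attach.map fun x => add' x.1 (.node L' R')) ++
             (R'.attach.map fun y => add' (.node L R) y.1))
termination_by G H => sizeOf G + sizeOf H
decreasing_by
  all_goals
    simp_wf
    first
      | (have := List.sizeOf_lt_of_mem x.2; simp_all; omega)
      | (have := List.sizeOf_lt_of_mem y.2; simp_all; omega)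

/-- The disjunctive sum, undefined (`none`) exactly when adding `∞` to `∞̄`. -/
def add : AGame → AGame → Option AGame
  | .inf, .binf => none
  | .binf, .inf => none
  | G, H => some (add' G H)

mutual
/-- `o^L(G) = L` : Left, playing first, wins `G`. -/
def lf : AGame → Bool
  | .inf => true
  | .binf => false
  | .node L _ => L.attach.any fun x => ls x.1
termination_by G => sizeOf G
decreasing_by
  simp_wf; have := List.sizeOf_lt_of_mem x.2; simp_all; omega
/-- `o^R(G) = L` : Left, playing second, wins `G`. -/
def ls : AGame → Bool
  | .inf => true
  | .binf => false
  | .node _ R => R.attach.all fun x => lf x.1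
termination_by G => sizeOf G
decreasing_by
  simp_wf; have := List.sizeOf_lt_of_mem x.2; simp_all; omega
end

/-- The combined outcome `(o^L(G), o^R(G))`, encoded as a pair of booleans
(`true` = Left wins). `(true,true)` is 𝓛, `(true,false)` is 𝓝, `(false,true)` is 𝓟,
`(false,false)` is 𝓡. -/
def outcome (G : AGame) : Bool × Bool := (lf G, ls G)

/-- The partial order of outcomes (componentwise, 𝓛 maximal, 𝓡 minimal, 𝓝 ∥ 𝓟). -/
def OutLE (a b : Bool × Bool) : Prop :=
  (a.1 = true → b.1 = true) ∧ (a.2 = true → b.2 = true)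

/-- `G ≥ H` : replacing `H` by `G` never hurts Left in any disjunctive sum. -/
def GE (G H : AGame) : Prop :=
  ∀ X : AGame, Valid X → X ≠ .inf → X ≠ .binf →
    OutLE (outcome (add' H X)) (outcome (add' G X))

/-- Game equivalence. -/
def Equiv (G H : AGame) : Prop :=
  ∀ X : AGame, Valid X → X ≠ .inf → X ≠ .binf →
    outcome (add' G X) = outcome (add' H X)

/-- The zero game `{∞̄ | ∞}`. -/
def zero : AGame := .node [.binf] [.inf]

/-- The conjugate (players switch roles). -/
def neg : AGame → AGame
  | .inf => .binf
  | .binf => .inf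
  | .node L R =>
      .node (R.attach.map fun x => neg x.1) (L.attach.map fun x => neg x.1)
termination_by G => sizeOf G
decreasing_by
  all_goals
    simp_wf
    (have := List.sizeOf_lt_of_mem x.2; simp_all; omega)


/-- Left option set (empty list for the terminating games). -/
def leftOptions : AGame → List AGame
  | .node L _ => L
  | _ => []

/-- Right option set (empty list for the terminating games). -/
def rightOptions : AGame → List AGame
  | .node _ R => R
  | _ => []

/-- A check: a game having `∞` as a Left option or `∞̄` as a Right option. -/
def IsCheck : AGame → Prop
  | .node L R => .inf ∈ L ∨ .binf ∈ R
  | _ => False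

/-- `Follower H G` : `H` is a follower of `G` (i.e. `G` itself, an option of `G`,
an option of an option, and so on). -/
inductive Follower : AGame → AGame → Prop
  | refl (G : AGame) : Follower G G
  | left {H K : AGame} {L R : List AGame} : K ∈ L → Follower H K → Follower H (.node L R)
  | right {H K : AGame} {L R : List AGame} : K ∈ R → Follower H K → Follower H (.node L R)

/-- A Conway form: distinct from `∞` and `∞̄`, with no checks among its followers. -/
def ConwayForm (G : AGame) : Prop :=
  G ≠ .inf ∧ G ≠ .binf ∧ ∀ H, Follower H G → ¬ IsCheck H

/-- A Conway game: a game equivalent to some Conway form. -/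
def ConwayGame (G : AGame) : Prop :=
  ∃ G', Valid G' ∧ ConwayForm G' ∧ Equiv G G'

/-- `J` is invertible: `J + K = 0` (in the sense of game equivalence) for some affine `K`. -/
def Invertible (J : AGame) : Prop :=
  ∃ K, Valid K ∧ ∃ S, add J K = some S ∧ Equiv S zero

/-- Number forms: the images of the surreal-number Conway forms under the embedding
that replaces an empty option set by `{∞̄}` on the Left and by `{∞}` on the Right.
Every genuine Left option is strictly less than every genuine Right option, and
all genuine options are again number forms. -/
inductive NumForm : AGame → Prop
  | mk {L R : List AGame}
      (hL0 : L ≠ []) (hR0 : R ≠ [])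
      (hLb : .binf ∈ L → L = [.binf]) (hRi : .inf ∈ R → R = [.inf])
      (hLnum : ∀ x ∈ L, x ≠ .binf → NumForm x)
      (hRnum : ∀ y ∈ R, y ≠ .inf → NumForm y)
      (hlt : ∀ x ∈ L, ∀ y ∈ R, x ≠ .binf → y ≠ .inf → GE y x ∧ ¬ GE x y) :
      NumForm (.node L R)

/-- A number: an affine game equal to (the image of) a Conway number form. -/
def IsNumber (G : AGame) : Prop := ∃ n, Valid n ∧ NumForm n ∧ Equiv G n

/-- The pathetic tiny `⧾∞ = {0 | {0 | ∞̄}}`. -/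
def tinyInf : AGame := .node [zero] [.node [zero] [.binf]]

/-- The pathetic miny `⧿∞ = {{∞ | 0} | 0}`. -/
def minyInf : AGame := .node [.node [.inf] [zero]] [zero]

end AGame

/-!
Left wins a sum `G + X` playing second if she wins both components playing second, and she wins
it playing first if she wins one component playing first and the other playing second: she
always answers in the component Right has just moved in. Adding `0 = {∞̄ | ∞}` changes no outcome,
because a move in `0` loses at once. So if Left wins `G` playing second, `o(G + X) ≥ o(X) = o(0 + X)`
for every `X`; conversely, `G ≥ 0` tested against `X = 0` gives `o^R(G) = o^R(G + 0) ≥ o^R(0 + 0) = L`.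
-/

namespace AGame

@[simp] theorem lf_inf : lf .inf = true := by rw [lf]
@[simp] theorem lf_binf : lf .binf = false := by rw [lf]
@[simp] theorem ls_inf : ls .inf = true := by rw [ls]
@[simp] theorem ls_binf : ls .binf = false := by rw [ls]

theorem lf_node_iff {L R : List AGame} : lf (.node L R) = true ↔ ∃ g ∈ L, ls g = true := by
  rw [lf]; simp

theorem ls_node_iff {L R : List AGame} : ls (.node L R) = true ↔ ∀ g ∈ R, lf g = true := by
  rw [ls]; simp

@[simp] theorem inf_add' (X : AGame) : add' .inf X = .inf := by rw [add']

@[simp] theorem binf_add'_node (L R : List AGame) : add' .binf (.node L R) = .binf := by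
  rw [add']; simp

@[simp] theorem node_add'_inf (L R : List AGame) : add' (.node L R) .inf = .inf := by
  rw [add']; simp

@[simp] theorem node_add'_binf (L R : List AGame) : add' (.node L R) .binf = .binf := by
  rw [add'] <;> simp

theorem node_add'_node (L R L' R' : List AGame) :
    add' (.node L R) (.node L' R') =
      .node (L.map (add' · (.node L' R')) ++ L'.map (add' (.node L R) ·))
        (R.map (add' · (.node L' R')) ++ R'.map (add' (.node L R) ·)) := by
  rw [add']; simp

theorem sizeOf_lt_of_mem_left {g : AGame} {L R : List AGame} (h : g ∈ L) :
    sizeOf g < sizeOf (AGame.node L R) := by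
  have := List.sizeOf_lt_of_mem h; rw [node.sizeOf_spec]; omega

theorem sizeOf_lt_of_mem_right {g : AGame} {L R : List AGame} (h : g ∈ R) :
    sizeOf g < sizeOf (AGame.node L R) := by
  have := List.sizeOf_lt_of_mem h; rw [node.sizeOf_spec]; omega

theorem lf_node_add'_node_iff {L R L' R' : List AGame} :
    lf (add' (.node L R) (.node L' R')) = true ↔
      (∃ g ∈ L, ls (add' g (.node L' R')) = true) ∨ ∃ x ∈ L', ls (add' (.node L R) x) = true := by
  simp only [node_add'_node, lf_node_iff, List.mem_append, or_and_right, exists_or, List.mem_map,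
    exists_exists_and_eq_and]

theorem ls_node_add'_node_iff {L R L' R' : List AGame} :
    ls (add' (.node L R) (.node L' R')) = true ↔
      (∀ g ∈ R, lf (add' g (.node L' R')) = true) ∧ ∀ x ∈ R', lf (add' (.node L R) x) = true := by
  simp only [node_add'_node, ls_node_iff, List.forall_mem_append, List.forall_mem_map]

theorem outcome_zero_add' : ∀ X : AGame, outcome (add' zero X) = outcome X
  | .inf => by simp [zero]
  | .binf => by simp [zero]
  | .node L R => by
    have ihL : ∀ g ∈ L, ls (add' zero g) = ls g := fun g hg =>
      have := sizeOf_lt_of_mem_left (R := R) hg; congrArg Prod.snd (outcome_zero_add' g)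
    have ihR : ∀ g ∈ R, lf (add' zero g) = lf g := fun g hg =>
      have := sizeOf_lt_of_mem_right (L := L) hg; congrArg Prod.fst (outcome_zero_add' g)
    rw [outcome, outcome, Prod.mk.injEq]
    refine ⟨Bool.eq_iff_iff.2 ?_, Bool.eq_iff_iff.2 ?_⟩
    · rw [zero, lf_node_add'_node_iff, ← zero, lf_node_iff]
      simp only [List.mem_singleton, exists_eq_left, binf_add'_node, ls_binf, Bool.false_eq_true,
        false_or]
      exact exists_congr fun g => and_congr_right fun hg => by rw [ihL g hg]
    · rw [zero, ls_node_add'_node_iff, ← zero, ls_node_iff]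
      simp only [List.forall_mem_singleton, inf_add', lf_inf, true_and]
      exact forall₂_congr fun g hg => by rw [ihR g hg]
termination_by X => sizeOf X

theorem outcome_add'_zero : ∀ G : AGame, outcome (add' G zero) = outcome G
  | .inf => by simp
  | .binf => by simp [zero]
  | .node L R => by
    have ihL : ∀ g ∈ L, ls (add' g zero) = ls g := fun g hg =>
      have := sizeOf_lt_of_mem_left (R := R) hg; congrArg Prod.snd (outcome_add'_zero g)
    have ihR : ∀ g ∈ R, lf (add' g zero) = lf g := fun g hg =>
      have := sizeOf_lt_of_mem_right (L := L) hg; congrArg Prod.fst (outcome_add'_zero g)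
    rw [outcome, outcome, Prod.mk.injEq]
    refine ⟨Bool.eq_iff_iff.2 ?_, Bool.eq_iff_iff.2 ?_⟩
    · rw [zero, lf_node_add'_node_iff, ← zero, lf_node_iff]
      simp only [List.mem_singleton, exists_eq_left, node_add'_binf, ls_binf, Bool.false_eq_true,
        or_false]
      exact exists_congr fun g => and_congr_right fun hg => by rw [ihL g hg]
    · rw [zero, ls_node_add'_node_iff, ← zero, ls_node_iff]
      simp only [List.forall_mem_singleton, node_add'_inf, lf_inf, and_true]
      exact forall₂_congr fun g hg => by rw [ihR g hg]
termination_by G => sizeOf G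

mutual

theorem ls_add'_of_ls_of_ls : ∀ {G X : AGame}, ls G = true → ls X = true → ls (add' G X) = true
  | .inf, _, _, _ => by simp
  | .binf, _, hG, _ => by simp at hG
  | .node _ _, .binf, _, hX => by simp at hX
  | .node _ _, .inf, _, _ => by simp
  | .node L R, .node L' R', hG, hX => by
    rw [ls_node_iff] at hG hX
    refine ls_node_add'_node_iff.2 ⟨fun g hg => ?_, fun x hx => ?_⟩
    · have := sizeOf_lt_of_mem_right (L := L) hg
      exact lf_add'_of_lf_of_ls (hG g hg) (ls_node_iff.2 hX)
    · have := sizeOf_lt_of_mem_right (L := L') hx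
      exact lf_add'_of_ls_of_lf (ls_node_iff.2 hG) (hX x hx)
termination_by G X => sizeOf G + sizeOf X

theorem lf_add'_of_ls_of_lf : ∀ {G X : AGame}, ls G = true → lf X = true → lf (add' G X) = true
  | .inf, _, _, _ => by simp
  | .binf, _, hG, _ => by simp at hG
  | .node _ _, .binf, _, hX => by simp at hX
  | .node _ _, .inf, _, _ => by simp
  | .node L R, .node L' R', hG, hX => by
    obtain ⟨x, hx, hxs⟩ := lf_node_iff.1 hX
    have := sizeOf_lt_of_mem_left (R := R') hx
    exact lf_node_add'_node_iff.2 (.inr ⟨x, hx, ls_add'_of_ls_of_ls hG hxs⟩)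
termination_by G X => sizeOf G + sizeOf X

theorem lf_add'_of_lf_of_ls : ∀ {G X : AGame}, lf G = true → ls X = true → lf (add' G X) = true
  | .inf, _, _, _ => by simp
  | .binf, _, hG, _ => by simp at hG
  | .node _ _, .binf, _, hX => by simp at hX
  | .node _ _, .inf, _, _ => by simp
  | .node L R, .node L' R', hG, hX => by
    obtain ⟨g, hg, hgs⟩ := lf_node_iff.1 hG
    have := sizeOf_lt_of_mem_left (R := R) hg
    exact lf_node_add'_node_iff.2 (.inl ⟨g, hg, ls_add'_of_ls_of_ls hgs hX⟩)
termination_by G X => sizeOf G + sizeOf X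

end

theorem valid_zero : Valid zero :=
  .node (List.cons_ne_nil _ _) (List.cons_ne_nil _ _) (by simpa using .binf) (by simpa using .inf)

theorem ls_zero : ls zero = true := by
  simp [zero, ls_node_iff]

/-- Fundamental Theorem of Affine Normal Play: `G ≥ 0` if and only if Left
wins `G` playing second (the outcome of `G` is in 𝓛 ∪ 𝓟). -/
theorem ge_zero_iff_leftWinsSecond (G : AGame) (hG : Valid G) :
    GE G zero ↔ ls G = true := by
  constructor
  · intro h
    have hsecond := (h zero valid_zero (by simp [zero]) (by simp [zero])).2
    rw [outcome_zero_add', outcome_add'_zero] at hsecond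
    exact hsecond ls_zero
  · intro hls X _ _ _
    rw [outcome_zero_add']
    exact ⟨lf_add'_of_ls_of_lf hls, ls_add'_of_ls_of_ls hls⟩

end AGame
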